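/- arXiv:1906.06771 — 10 statements merged into one kernel-verified Lean document; each statement's English description precedes it below -/
import Mathlib

section
/- Let A be a 3-Lie algebra over a field F of characteristic zero and let D : A → A be an involutive derivation. Then for all x, y, z ∈ A one has [Dx, Dy, Dz] = D([Dx, Dy, z] + [Dy, Dz, x] + [Dz, Dx, y]); in other words, D is an O-operator (℘-operator) of A associated to the adjoint representation. -/
open scoped TensorProduct

theorem stmt0
    (F A : Type*) [Field F] [CharZero F] [AddCommGroup A] [Module F A]
    (br : A →ₗ[F] A →ₗ[F] A →ₗ[F] A)
    (halt1 : ∀ x z : A, br x x z = 0)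
    (halt2 : ∀ x y : A, br x y y = 0)
    (halt3 : ∀ x y : A, br x y x = 0)
    (hfil : ∀ x1 x2 x3 x4 x5 : A,
      br x1 x2 (br x3 x4 x5) =
        br (br x1 x2 x3) x4 x5 + br x3 (br x1 x2 x4) x5 + br x3 x4 (br x1 x2 x5))
    (D : A →ₗ[F] A)
    (hder : ∀ x y z : A,
      D (br x y z) = br (D x) y z + br x (D y) z + br x y (D z))
    (hinv : ∀ x : A, D (D x) = x)
    :
    ∀ x y z : A,
      br (D x) (D y) (D z) =
        D (br (D x) (D y) z + br (D y) (D z) x + br (D z) (D x) y) := by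
  -- skew symmetry in first two arguments
  have s12 : ∀ x y z : A, br x y z = - br y x z := by
    intro x y z
    have h := halt1 (x + y) z
    simp only [map_add, LinearMap.add_apply, halt1] at h
    rw [zero_add, add_zero] at h
    exact eq_neg_of_add_eq_zero_right h
  -- skew symmetry in last two arguments
  have s23 : ∀ x y z : A, br x y z = - br x z y := by
    intro x y z
    have h := halt2 x (y + z)
    simp only [map_add, LinearMap.add_apply, halt2] at h
    rw [zero_add, add_zero] at h
    exact eq_neg_of_add_eq_zero_right h
  -- cyclic invariance
  have cyc2 : ∀ a b c : A, br a b c = br b c a := by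
    intro a b c
    rw [s12 a b c, s23 b a c, neg_neg]
  have cyc : ∀ a b c : A, br a b c = br c a b := by
    intro a b c
    rw [cyc2 a b c, cyc2 b c a]
  -- key identity from D ∘ D = id
  have key : ∀ x y z : A,
      br (D x) (D y) z + br (D x) y (D z) + br x (D y) (D z) = - br x y z := by
    intro x y z
    have h := hinv (br x y z)
    rw [hder x y z, map_add, map_add, hder, hder, hder] at h
    simp only [hinv] at h
    have h2 : (2 : F) • (br (D x) (D y) z + br (D x) y (D z) + br x (D y) (D z)) =
        (2 : F) • (- br x y z) := by
      rw [two_smul, two_smul, ← sub_eq_zero]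
      have e : (br (D x) (D y) z + br (D x) y (D z) + br x (D y) (D z) +
          (br (D x) (D y) z + br (D x) y (D z) + br x (D y) (D z))) -
          (- br x y z + - br x y z) =
          (br x y z + br (D x) (D y) z + br (D x) y (D z) +
            (br (D x) (D y) z + br x y z + br x (D y) (D z)) +
            (br (D x) y (D z) + br x (D y) (D z) + br x y z)) - br x y z := by
        abel
      rw [e, h, sub_self]
    exact smul_right_injective A (two_ne_zero) h2
  intro x y z
  have hT : br (D x) (D y) (D z) =
      - br x y (D z) - br (D x) y z - br x (D y) z := by
    have h := key x y (D z)
    rw [hinv z] at h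
    rw [← sub_eq_zero]
    rw [show br (D x) (D y) (D z) - (- br x y (D z) - br (D x) y z - br x (D y) z) =
        (br (D x) (D y) (D z) + br (D x) y z + br x (D y) z) - (- br x y (D z)) from by
      abel]
    rw [h, sub_self]
  rw [map_add, map_add, hder, hder, hder]
  simp only [hinv]
  rw [cyc y (D z) x, cyc (D y) z x, cyc (D y) (D z) (D x),
    cyc2 z (D x) y, cyc2 (D z) x y, cyc2 (D z) (D x) (D y), hT]
  abel
end

section
/- Let A be a 3-Lie algebra over a field F of characteristic zero and let D : A → A be an involutive derivation. Then A decomposes as the internal direct sum A = A1 ⊕ A−1 of the eigenspaces A1 = {v ∈ A : Dv = v} and A−1 = {v ∈ A : Dv = −v}, and both eigenspaces are abelian subalgebras: [x,y,z] = 0 whenever x, y, z all lie in A1, and [x,y,z] = 0 whenever x, y, z all lie in A−1. -/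
open scoped TensorProduct

theorem stmt1
    (F A : Type*) [Field F] [CharZero F] [AddCommGroup A] [Module F A]
    (br : A →ₗ[F] A →ₗ[F] A →ₗ[F] A)
    (halt1 : ∀ x z : A, br x x z = 0)
    (halt2 : ∀ x y : A, br x y y = 0)
    (halt3 : ∀ x y : A, br x y x = 0)
    (hfil : ∀ x1 x2 x3 x4 x5 : A,
      br x1 x2 (br x3 x4 x5) =
        br (br x1 x2 x3) x4 x5 + br x3 (br x1 x2 x4) x5 + br x3 x4 (br x1 x2 x5))
    (D : A →ₗ[F] A)
    (hder : ∀ x y z : A,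
      D (br x y z) = br (D x) y z + br x (D y) z + br x y (D z))
    (hinv : ∀ x : A, D (D x) = x)
    :
    (∀ a : A, ∃! p : A × A, D p.1 = p.1 ∧ D p.2 = -p.2 ∧ a = p.1 + p.2) ∧
    (∀ x y z : A, D x = x → D y = y → D z = z → br x y z = 0) ∧
    (∀ x y z : A, D x = -x → D y = -y → D z = -z → br x y z = 0) := by
  have h2 : (2 : F) ≠ 0 := two_ne_zero
  have key0 : ∀ w : A, w = w + w + w + (w + w + w) + (w + w + w) → w = 0 := by
    intro w h9
    have h8 : (8 : F) • w = 0 := by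
      have : (8 : F) • w = w + w + w + (w + w + w) + (w + w + w) - w := by
        rw [show (8 : F) = (1+1+1+1+1+1+1+1 : F) by norm_num]
        simp [add_smul, one_smul]
        abel
      rw [this, ← h9]
      abel
    rcases smul_eq_zero.mp h8 with h | h
    · exact absurd h (by norm_num)
    · exact h
  have key : ∀ w : A, D w = w + w + w → w = 0 := by
    intro w hw
    apply key0
    have h9 : D (D w) = w + w + w + (w + w + w) + (w + w + w) := by
      rw [hw, map_add, map_add, hw]
    rw [hinv w] at h9
    exact h9
  have key' : ∀ w : A, D w = -(w + w + w) → w = 0 := by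
    intro w hw
    apply key0
    have h9 : D (D w) = w + w + w + (w + w + w) + (w + w + w) := by
      rw [hw, map_neg, map_add, map_add, hw]
      abel
    rw [hinv w] at h9
    exact h9
  refine ⟨?_, ?_, ?_⟩
  · intro a
    refine ⟨((2 : F)⁻¹ • (a + D a), (2 : F)⁻¹ • (a - D a)), ⟨?_, ?_, ?_⟩, ?_⟩
    · simp [map_add, hinv a, add_comm]
    · simp [map_sub, hinv a]
      rw [← smul_neg]
      congr 1
      abel
    · rw [← smul_add]
      have : a + D a + (a - D a) = (2 : F) • a := by
        rw [two_smul]; abel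
      rw [this, smul_smul, inv_mul_cancel₀ h2, one_smul]
    · rintro ⟨q1, q2⟩ ⟨hq1, hq2, hq⟩
      have hDa : D a = q1 - q2 := by
        rw [hq, map_add, hq1, hq2]; abel
      have e1 : q1 = (2 : F)⁻¹ • (a + D a) := by
        rw [hDa, hq]
        have : q1 + q2 + (q1 - q2) = (2 : F) • q1 := by rw [two_smul]; abel
        rw [this, smul_smul, inv_mul_cancel₀ h2, one_smul]
      have e2 : q2 = (2 : F)⁻¹ • (a - D a) := by
        rw [hDa, hq]
        have : q1 + q2 - (q1 - q2) = (2 : F) • q2 := by rw [two_smul]; abel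
        rw [this, smul_smul, inv_mul_cancel₀ h2, one_smul]
      exact Prod.ext e1 e2
  · intro x y z hx hy hz
    exact key _ (by rw [hder, hx, hy, hz])
  · intro x y z hx hy hz
    apply key'
    rw [hder, hx, hy, hz]
    simp only [map_neg, LinearMap.neg_apply]
    abel
end

section
/- Let A be a 3-Lie algebra over a field F of characteristic zero and D an involutive derivation on A. Define {x,y,z}_D = [Dx,Dy,z] and {x,y,z}_{Dc} = {x,y,z}_D + {y,z,x}_D + {z,x,y}_D. Then {x,y,z}_D = −{y,x,z}_D for all x,y,z ∈ A, and for all x1,...,x5 ∈ A one has {x1,x2,{x3,x4,x5}_D}_D = {{x1,x2,x3}_{Dc},x4,x5}_D + {x3,{x1,x2,x4}_{Dc},x5}_D + {x3,x4,{x1,x2,x5}_D}_D. -/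
open scoped TensorProduct

theorem stmt3
    (F A : Type*) [Field F] [CharZero F] [AddCommGroup A] [Module F A]
    (br : A →ₗ[F] A →ₗ[F] A →ₗ[F] A)
    (halt1 : ∀ x z : A, br x x z = 0)
    (halt2 : ∀ x y : A, br x y y = 0)
    (halt3 : ∀ x y : A, br x y x = 0)
    (hfil : ∀ x1 x2 x3 x4 x5 : A,
      br x1 x2 (br x3 x4 x5) =
        br (br x1 x2 x3) x4 x5 + br x3 (br x1 x2 x4) x5 + br x3 x4 (br x1 x2 x5))
    (D : A →ₗ[F] A)
    (hder : ∀ x y z : A,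
      D (br x y z) = br (D x) y z + br x (D y) z + br x y (D z))
    (hinv : ∀ x : A, D (D x) = x)
    (bD : A → A → A → A)
    (hbD : ∀ x y z : A, bD x y z = br (D x) (D y) z)
    (bDc : A → A → A → A)
    (hbDc : ∀ x y z : A, bDc x y z = bD x y z + bD y z x + bD z x y)
    :
    (∀ x y z : A, bD x y z = -bD y x z) ∧
    (∀ x1 x2 x3 x4 x5 : A,
      bD x1 x2 (bD x3 x4 x5) =
        bD (bDc x1 x2 x3) x4 x5 + bD x3 (bDc x1 x2 x4) x5 + bD x3 x4 (bD x1 x2 x5)) := by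
  have h12 : ∀ x y z : A, br x y z = - br y x z := by
    intro x y z
    have h := halt1 (x + y) z
    simp only [map_add, LinearMap.add_apply, halt1, zero_add, add_zero] at h
    exact eq_neg_of_add_eq_zero_right h
  have h23 : ∀ x y z : A, br x y z = - br x z y := by
    intro x y z
    have h := halt2 x (y + z)
    simp only [map_add, LinearMap.add_apply, halt2, zero_add, add_zero] at h
    exact eq_neg_of_add_eq_zero_right h
  have hcyc : ∀ x y z : A, br x y z = br y z x := by
    intro x y z
    rw [h12, h23, neg_neg]
  have two : ∀ x : A, x + x = 0 → x = 0 := by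
    intro x h
    have h2 : (2 : F) • x = 0 := by rw [two_smul]; exact h
    rcases smul_eq_zero.mp h2 with h3 | h3
    · exact absurd h3 (by norm_num)
    · exact h3
  have hkey : ∀ a b c : A,
      br (D a) (D b) c + br (D a) b (D c) + br a (D b) (D c) = - br a b c := by
    intro a b c
    have h2 : br a b c = D (br (D a) b c) + D (br a (D b) c) + D (br a b (D c)) := by
      conv_lhs => rw [← hinv (br a b c), hder a b c, map_add, map_add]
    simp only [hder, hinv] at h2
    have h3 : (br (D a) (D b) c + br (D a) b (D c) + br a (D b) (D c) + br a b c) +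
        (br (D a) (D b) c + br (D a) b (D c) + br a (D b) (D c) + br a b c) = 0 := by
      have h4 : (br (D a) (D b) c + br (D a) b (D c) + br a (D b) (D c) + br a b c) +
          (br (D a) (D b) c + br (D a) b (D c) + br a (D b) (D c) + br a b c)
          = (br a b c + br (D a) (D b) c + br (D a) b (D c) +
              (br (D a) (D b) c + br a b c + br a (D b) (D c)) +
              (br (D a) b (D c) + br a (D b) (D c) + br a b c)) - br a b c := by abel
      rw [h4, ← h2, sub_self]
    exact eq_neg_of_add_eq_zero_left (two _ h3)
  have hkey' : ∀ a b c : A,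
      br a b (D c) + br a (D b) c + br (D a) b c = - br (D a) (D b) (D c) := by
    intro a b c
    have h := hkey (D a) (D b) (D c)
    simpa only [hinv] using h
  have hD3 : ∀ a b c : A, D (bDc a b c) = br (D a) (D b) (D c) := by
    intro a b c
    have h1 : bDc a b c = br (D a) (D b) c + br (D b) (D c) a + br (D c) (D a) b := by
      rw [hbDc, hbD, hbD, hbD]
    rw [h1, map_add, map_add, hder, hder, hder]
    simp only [hinv]
    rw [show br (D b) (D c) (D a) = br (D a) (D b) (D c) from (hcyc (D a) (D b) (D c)).symm,
        show br (D c) (D a) (D b) = br (D a) (D b) (D c) from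
          ((hcyc (D a) (D b) (D c)).trans (hcyc (D b) (D c) (D a))).symm,
        show br b (D c) a = br a b (D c) from (hcyc a b (D c)).symm,
        show br (D b) c a = br a (D b) c from (hcyc a (D b) c).symm,
        show br c (D a) b = br (D a) b c from
          ((hcyc (D a) b c).trans (hcyc b c (D a))).symm,
        show br (D c) a b = br a b (D c) from
          ((hcyc a b (D c)).trans (hcyc b (D c) a)).symm]
    have hz : br a b (D c) + br a (D b) c + br (D a) b c + br (D a) (D b) (D c) = 0 := by
      rw [hkey' a b c]
      abel
    calc br a (D b) c + br (D a) b c + br (D a) (D b) (D c) +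
          (br a b (D c) + br a (D b) c + br (D a) (D b) (D c)) +
          (br (D a) b c + br a b (D c) + br (D a) (D b) (D c))
        = (br a b (D c) + br a (D b) c + br (D a) b c + br (D a) (D b) (D c)) +
          (br a b (D c) + br a (D b) c + br (D a) b c + br (D a) (D b) (D c)) +
          br (D a) (D b) (D c) := by abel
      _ = br (D a) (D b) (D c) := by rw [hz]; abel
  constructor
  · intro x y z
    rw [hbD, hbD]
    exact h12 (D x) (D y) z
  · intro x1 x2 x3 x4 x5
    simp only [hbD]
    rw [hD3, hD3, hfil]
end

section
/- Let A be a 3-Lie algebra over a field F of characteristic zero and D an involutive derivation on A. Define {x,y,z}_D = [Dx,Dy,z] and {x,y,z}_{Dc} = {x,y,z}_D + {y,z,x}_D + {z,x,y}_D. Then for all x1,...,x5 ∈ A one has {{x1,x2,x3}_{Dc},x4,x5}_D = {x1,x2,{x3,x4,x5}_D}_D + {x2,x3,{x1,x4,x5}_D}_D + {x3,x1,{x2,x4,x5}_D}_D. Consequently (A, {·,·,·}_D) is a 3-pre-Lie algebra. -/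
open scoped TensorProduct

theorem stmt4
    (F A : Type*) [Field F] [CharZero F] [AddCommGroup A] [Module F A]
    (br : A →ₗ[F] A →ₗ[F] A →ₗ[F] A)
    (halt1 : ∀ x z : A, br x x z = 0)
    (halt2 : ∀ x y : A, br x y y = 0)
    (halt3 : ∀ x y : A, br x y x = 0)
    (hfil : ∀ x1 x2 x3 x4 x5 : A,
      br x1 x2 (br x3 x4 x5) =
        br (br x1 x2 x3) x4 x5 + br x3 (br x1 x2 x4) x5 + br x3 x4 (br x1 x2 x5))
    (D : A →ₗ[F] A)
    (hder : ∀ x y z : A,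
      D (br x y z) = br (D x) y z + br x (D y) z + br x y (D z))
    (hinv : ∀ x : A, D (D x) = x)
    (bD : A → A → A → A)
    (hbD : ∀ x y z : A, bD x y z = br (D x) (D y) z)
    (bDc : A → A → A → A)
    (hbDc : ∀ x y z : A, bDc x y z = bD x y z + bD y z x + bD z x y)
    :
    (∀ x1 x2 x3 x4 x5 : A,
      bD (bDc x1 x2 x3) x4 x5 =
        bD x1 x2 (bD x3 x4 x5) + bD x2 x3 (bD x1 x4 x5) + bD x3 x1 (bD x2 x4 x5)) ∧
    (∀ x y z : A, bD x y z = -bD y x z) ∧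
    (∀ x1 x2 x3 x4 x5 : A,
      bD x1 x2 (bD x3 x4 x5) =
        bD (bDc x1 x2 x3) x4 x5 + bD x3 (bDc x1 x2 x4) x5 + bD x3 x4 (bD x1 x2 x5)) := by
  -- swap of the first two arguments
  have swap12 : ∀ x y z : A, br y x z = - br x y z := by
    intro x y z
    have h := halt1 (x + y) z
    simp only [map_add, LinearMap.add_apply, halt1] at h
    -- h : br x y z + br y x z = 0 (up to zeros)
    have h' : br x y z + br y x z = 0 := by
      have := h
      abel_nf at this ⊢
      linear_combination (norm := abel) this
    exact eq_neg_of_add_eq_zero_right h'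
  have swap23 : ∀ x y z : A, br x z y = - br x y z := by
    intro x y z
    have h := halt2 x (y + z)
    simp only [map_add, LinearMap.add_apply, halt2] at h
    have h' : br x y z + br x z y = 0 := by
      linear_combination (norm := abel) h
    exact eq_neg_of_add_eq_zero_right h'
  -- cyclic permutation (even)
  have cyc : ∀ x y z : A, br x y z = br y z x := by
    intro x y z
    rw [swap12 y x z, swap23 y z x, neg_neg]
  -- key lemma from involutivity
  have key : ∀ x y z : A,
      br (D x) (D y) z + br (D x) y (D z) + br x (D y) (D z) = - br x y z := by
    intro x y z
    have h := hinv (br x y z)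
    rw [hder, map_add, map_add, hder, hder, hder, hinv, hinv, hinv] at h
    -- h : (3 copies of br x y z) + 2 • S = br x y z
    have h2 : (2 : F) • (br (D x) (D y) z + br (D x) y (D z) + br x (D y) (D z)
        + br x y z) = 0 := by
      rw [two_smul]
      linear_combination (norm := abel) h
    have h3 := (smul_eq_zero.mp h2).resolve_left (two_ne_zero)
    linear_combination (norm := abel) h3
  -- bDc is minus the bracket
  have hbDc' : ∀ x y z : A, bDc x y z = - br x y z := by
    intro x y z
    rw [hbDc, hbD, hbD, hbD, ← key x y z, cyc (D y) (D z) x, cyc (D z) x (D y),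
      cyc (D z) (D x) y]
    abel
  -- D applied to bDc
  have hDbDc : ∀ x y z : A, D (bDc x y z) = br (D x) (D y) (D z) := by
    intro x y z
    rw [hbDc', map_neg, hder]
    have h := key (D x) (D y) (D z)
    rw [hinv, hinv, hinv] at h
    linear_combination (norm := abel) -h
  refine ⟨?_, ?_, ?_⟩
  · intro x1 x2 x3 x4 x5
    simp only [hbD]
    rw [hDbDc]
    set a1 := D x1; set a2 := D x2; set a3 := D x3; set a4 := D x4
    have h := hfil a4 x5 a1 a2 a3
    rw [cyc a4 x5 (br a1 a2 a3), cyc x5 (br a1 a2 a3) a4] at h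
    rw [cyc a4 x5 a1, cyc x5 a1 a4] at h
    rw [cyc a4 x5 a2, cyc x5 a2 a4] at h
    rw [cyc a4 x5 a3, cyc x5 a3 a4] at h
    rw [cyc (br a1 a4 x5) a2 a3] at h
    rw [cyc a1 (br a2 a4 x5) a3, cyc (br a2 a4 x5) a3 a1] at h
    rw [h]; abel
  · intro x y z
    rw [hbD, hbD, swap12]
  · intro x1 x2 x3 x4 x5
    simp only [hbD]
    rw [hDbDc, hDbDc]
    exact hfil (D x1) (D x2) (D x3) (D x4) x5
end

section
/- Let A be a 3-Lie algebra over a field F of characteristic zero and D an involutive derivation on A. Define {x,y,z}_A = D[x,y,Dz] and {x,y,z}_{Ac} = {x,y,z}_A + {y,z,x}_A + {z,x,y}_A. Then {x,y,z}_A = −{y,x,z}_A for all x,y,z, and for all x1,...,x5 ∈ A one has {x1,x2,{x3,x4,x5}_A}_A = {{x1,x2,x3}_{Ac},x4,x5}_A + {x3,{x1,x2,x4}_{Ac},x5}_A + {x3,x4,{x1,x2,x5}_A}_A. -/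
open scoped TensorProduct

theorem stmt9
    (F A : Type*) [Field F] [CharZero F] [AddCommGroup A] [Module F A]
    (br : A →ₗ[F] A →ₗ[F] A →ₗ[F] A)
    (halt1 : ∀ x z : A, br x x z = 0)
    (halt2 : ∀ x y : A, br x y y = 0)
    (halt3 : ∀ x y : A, br x y x = 0)
    (hfil : ∀ x1 x2 x3 x4 x5 : A,
      br x1 x2 (br x3 x4 x5) =
        br (br x1 x2 x3) x4 x5 + br x3 (br x1 x2 x4) x5 + br x3 x4 (br x1 x2 x5))
    (D : A →ₗ[F] A)
    (hder : ∀ x y z : A,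
      D (br x y z) = br (D x) y z + br x (D y) z + br x y (D z))
    (hinv : ∀ x : A, D (D x) = x)
    (bA : A → A → A → A)
    (hbA : ∀ x y z : A, bA x y z = D (br x y (D z)))
    (bAc : A → A → A → A)
    (hbAc : ∀ x y z : A, bAc x y z = bA x y z + bA y z x + bA z x y)
    :
    (∀ x y z : A, bA x y z = -bA y x z) ∧
    (∀ x1 x2 x3 x4 x5 : A,
      bA x1 x2 (bA x3 x4 x5) =
        bA (bAc x1 x2 x3) x4 x5 + bA x3 (bAc x1 x2 x4) x5 + bA x3 x4 (bA x1 x2 x5)) := by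
  have swap12 : ∀ x y z : A, br x y z = - br y x z := by
    intro x y z
    have h := halt1 (x + y) z
    simp only [map_add, LinearMap.add_apply, halt1, zero_add, add_zero] at h
    exact eq_neg_of_add_eq_zero_right h
  have swap23 : ∀ x y z : A, br x y z = - br x z y := by
    intro x y z
    have h := halt2 x (y + z)
    simp only [map_add, LinearMap.add_apply, halt2, zero_add, add_zero] at h
    exact eq_neg_of_add_eq_zero_right h
  have cyc : ∀ x y z : A, br y z x = br x y z := by
    intro x y z
    rw [swap12 y z x, swap23 z y x, swap12 z x y, swap23 x z y]
    simp
  have key : ∀ x y z : A,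
      br (D x) (D y) z + br (D x) y (D z) + br x (D y) (D z) = - br x y z := by
    intro x y z
    have h0 : D (D (br x y z)) = br x y z := hinv _
    rw [hder x y z, map_add, map_add, hder (D x) y z, hder x (D y) z, hder x y (D z),
      hinv x, hinv y, hinv z] at h0
    have h4 : (br (D x) (D y) z + br (D x) y (D z) + br x (D y) (D z) + br x y z) +
        (br (D x) (D y) z + br (D x) y (D z) + br x (D y) (D z) + br x y z) = 0 := by
      calc (br (D x) (D y) z + br (D x) y (D z) + br x (D y) (D z) + br x y z) +
            (br (D x) (D y) z + br (D x) y (D z) + br x (D y) (D z) + br x y z)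
          = (br x y z + br (D x) (D y) z + br (D x) y (D z) +
              (br (D x) (D y) z + br x y z + br x (D y) (D z)) +
              (br (D x) y (D z) + br x (D y) (D z) + br x y z)) - br x y z := by abel
        _ = 0 := by rw [h0, sub_self]
    have h6 : (2 : F) • (br (D x) (D y) z + br (D x) y (D z) + br x (D y) (D z) + br x y z)
        = 0 := by
      rw [two_smul]; exact h4
    have h7 : br (D x) (D y) z + br (D x) y (D z) + br x (D y) (D z) + br x y z = 0 := by
      rcases smul_eq_zero.mp h6 with h | h
      · exact absurd h two_ne_zero
      · exact h
    exact eq_neg_of_add_eq_zero_left h7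
  have L : ∀ x y z : A, D (br x y (D z)) = - br (D x) (D y) z := by
    intro x y z
    rw [hder x y (D z), hinv z]
    have hk0 : br (D x) (D y) z + br (D x) y (D z) + br x (D y) (D z) + br x y z = 0 := by
      rw [key x y z]; exact neg_add_cancel _
    exact eq_neg_of_add_eq_zero_left (by rw [← hk0]; abel)
  have hbA' : ∀ x y z : A, bA x y z = - br (D x) (D y) z := by
    intro x y z
    rw [hbA x y z]; exact L x y z
  have hbAc' : ∀ x y z : A, bAc x y z = br x y z := by
    intro x y z
    rw [hbAc, hbA' x y z, hbA' y z x, hbA' z x y,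
      cyc x (D y) (D z), cyc y (D z) (D x), cyc (D x) y (D z)]
    have hk : -(br (D x) (D y) z + br (D x) y (D z) + br x (D y) (D z)) = br x y z := by
      rw [key x y z, neg_neg]
    rw [← hk]; abel
  constructor
  · intro x y z
    rw [hbA x y z, hbA y x z, swap12 x y (D z), map_neg]
  · intro x1 x2 x3 x4 x5
    simp only [hbAc', hbA, hinv]
    rw [hfil x1 x2 x3 x4 (D x5), map_add, map_add]
end

section
/- Let A be a 3-Lie algebra over a field F of characteristic zero and D an involutive derivation on A. Define {x,y,z}_A = D[x,y,Dz] and {x,y,z}_{Ac} = {x,y,z}_A + {y,z,x}_A + {z,x,y}_A. Then for all x1,...,x5 ∈ A one has {{x1,x2,x3}_{Ac},x4,x5}_A = {x1,x2,{x3,x4,x5}_A}_A + {x2,x3,{x1,x4,x5}_A}_A + {x3,x1,{x2,x4,x5}_A}_A. Consequently (A, {·,·,·}_A) is a 3-pre-Lie algebra. -/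
open scoped TensorProduct

theorem stmt10
    (F A : Type*) [Field F] [CharZero F] [AddCommGroup A] [Module F A]
    (br : A →ₗ[F] A →ₗ[F] A →ₗ[F] A)
    (halt1 : ∀ x z : A, br x x z = 0)
    (halt2 : ∀ x y : A, br x y y = 0)
    (halt3 : ∀ x y : A, br x y x = 0)
    (hfil : ∀ x1 x2 x3 x4 x5 : A,
      br x1 x2 (br x3 x4 x5) =
        br (br x1 x2 x3) x4 x5 + br x3 (br x1 x2 x4) x5 + br x3 x4 (br x1 x2 x5))
    (D : A →ₗ[F] A)
    (hder : ∀ x y z : A,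
      D (br x y z) = br (D x) y z + br x (D y) z + br x y (D z))
    (hinv : ∀ x : A, D (D x) = x)
    (bA : A → A → A → A)
    (hbA : ∀ x y z : A, bA x y z = D (br x y (D z)))
    (bAc : A → A → A → A)
    (hbAc : ∀ x y z : A, bAc x y z = bA x y z + bA y z x + bA z x y)
    :
    (∀ x1 x2 x3 x4 x5 : A,
      bA (bAc x1 x2 x3) x4 x5 =
        bA x1 x2 (bA x3 x4 x5) + bA x2 x3 (bA x1 x4 x5) + bA x3 x1 (bA x2 x4 x5)) ∧
    (∀ x y z : A, bA x y z = -bA y x z) ∧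
    (∀ x1 x2 x3 x4 x5 : A,
      bA x1 x2 (bA x3 x4 x5) =
        bA (bAc x1 x2 x3) x4 x5 + bA x3 (bAc x1 x2 x4) x5 + bA x3 x4 (bA x1 x2 x5)) := by
  -- skew symmetry in first two arguments
  have skew12 : ∀ x y z : A, br x y z = - br y x z := by
    intro x y z
    have h := halt1 (x + y) z
    simp only [map_add, LinearMap.add_apply, halt1, zero_add, add_zero] at h
    exact eq_neg_of_add_eq_zero_right h
  -- skew symmetry in last two arguments
  have skew23 : ∀ x y z : A, br x y z = - br x z y := by
    intro x y z
    have h := halt2 x (y + z)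
    simp only [map_add, LinearMap.add_apply, halt2, zero_add, add_zero] at h
    exact eq_neg_of_add_eq_zero_right h
  -- cyclic invariance
  have cyc : ∀ x y z : A, br x y z = br y z x := by
    intro x y z
    rw [skew23 y z x, skew12 y x z, neg_neg]
  -- L3 : sum of double-D brackets equals minus the bracket
  have L3 : ∀ x y z : A,
      br (D x) (D y) z + br (D x) y (D z) + br x (D y) (D z) = - br x y z := by
    intro x y z
    have h1 := hder x y z
    have h2 := congrArg D h1
    rw [hinv] at h2
    simp only [map_add, hder, hinv] at h2
    have h5 : br x y z +
        ((br (D x) (D y) z + br (D x) y (D z) + br x (D y) (D z) + br x y z) +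
         (br (D x) (D y) z + br (D x) y (D z) + br x (D y) (D z) + br x y z)) =
        br x y z := by
      conv_rhs => rw [h2]
      abel
    have h6 := add_eq_left.mp h5
    have h4 : (2 : F) • (br (D x) (D y) z + br (D x) y (D z) + br x (D y) (D z)
        + br x y z) = 0 := by
      rw [two_smul]; exact h6
    have hT := (smul_eq_zero.mp h4).resolve_left two_ne_zero
    exact eq_neg_of_add_eq_zero_left hT
  -- bAc is the original bracket
  have bAc_eq : ∀ x y z : A, bAc x y z = br x y z := by
    intro x y z
    rw [hbAc, hbA, hbA, hbA, hder, hder, hder]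
    simp only [hinv]
    rw [cyc (D y) z (D x), cyc z (D x) (D y), cyc y (D z) (D x), cyc (D z) (D x) y,
        cyc y z x, cyc z x y, cyc (D z) x (D y)]
    have hS := L3 x y z
    calc (br (D x) y (D z) + br x (D y) (D z) + br x y z) +
          (br (D x) (D y) z + br (D x) y (D z) + br x y z) +
          (br x (D y) (D z) + br (D x) (D y) z + br x y z)
        = (br (D x) (D y) z + br (D x) y (D z) + br x (D y) (D z)) +
          (br (D x) (D y) z + br (D x) y (D z) + br x (D y) (D z)) +
          (br x y z + br x y z + br x y z) := by abel
      _ = br x y z := by rw [hS]; abel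
  -- key 3-Lie identity
  have key : ∀ a b c d e : A, br (br a b c) d e =
      br a b (br c d e) + br b c (br a d e) + br c a (br b d e) := by
    intro a b c d e
    have h := hfil d e a b c
    rw [cyc (br a b c) d e, h, ← cyc a d e, ← cyc b d e, ← cyc c d e,
        cyc (br a d e) b c, cyc a (br b d e) c, cyc (br b d e) c a]
    abel
  refine ⟨?_, ?_, ?_⟩
  · intro x1 x2 x3 x4 x5
    rw [bAc_eq]
    simp only [hbA, hinv]
    rw [← map_add, ← map_add]
    exact congrArg D (key x1 x2 x3 x4 (D x5))
  · intro x y z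
    rw [hbA, hbA, skew12 x y (D z)]
    exact map_neg D _
  · intro x1 x2 x3 x4 x5
    rw [bAc_eq, bAc_eq]
    simp only [hbA, hinv]
    rw [← map_add, ← map_add]
    exact congrArg D (hfil x1 x2 x3 x4 (D x5))
end

section
/- Let A be a 3-Lie algebra over a field F of characteristic zero and D an involutive derivation on A. Define {x,y,z}_A = D[x,y,Dz]. Then the cyclic sum recovers the original bracket: {x,y,z}_A + {y,z,x}_A + {z,x,y}_A = [x,y,z] for all x,y,z ∈ A; in other words, {·,·,·}_A is a compatible 3-pre-Lie structure whose sub-adjacent 3-Lie algebra is (A, [·,·,·]). -/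
open scoped TensorProduct

theorem stmt11
    (F A : Type*) [Field F] [CharZero F] [AddCommGroup A] [Module F A]
    (br : A →ₗ[F] A →ₗ[F] A →ₗ[F] A)
    (halt1 : ∀ x z : A, br x x z = 0)
    (halt2 : ∀ x y : A, br x y y = 0)
    (halt3 : ∀ x y : A, br x y x = 0)
    (hfil : ∀ x1 x2 x3 x4 x5 : A,
      br x1 x2 (br x3 x4 x5) =
        br (br x1 x2 x3) x4 x5 + br x3 (br x1 x2 x4) x5 + br x3 x4 (br x1 x2 x5))
    (D : A →ₗ[F] A)
    (hder : ∀ x y z : A,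
      D (br x y z) = br (D x) y z + br x (D y) z + br x y (D z))
    (hinv : ∀ x : A, D (D x) = x)
    (bA : A → A → A → A)
    (hbA : ∀ x y z : A, bA x y z = D (br x y (D z)))
    :
    ∀ x y z : A, bA x y z + bA y z x + bA z x y = br x y z := by
  -- antisymmetry lemmas
  have s12 : ∀ x y z : A, br y x z = - br x y z := by
    intro x y z
    have h := halt1 (x + y) z
    simp only [map_add, LinearMap.add_apply, halt1] at h
    linear_combination (norm := abel) h
  have s13 : ∀ x y z : A, br z y x = - br x y z := by
    intro x y z
    have h := halt3 (x + z) y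
    simp only [map_add, LinearMap.add_apply, halt3] at h
    linear_combination (norm := abel) h
  -- cyclic permutation
  have cyc : ∀ a b c : A, br a b c = br b c a := by
    intro a b c
    rw [s12 c b a, s13 a b c, neg_neg]
  intro x y z
  have hkey : br x y z =
      br x y z + br x y z + br x y z
        + (br (D x) (D y) z + br (D x) (D y) z)
        + (br (D x) y (D z) + br (D x) y (D z))
        + (br x (D y) (D z) + br x (D y) (D z)) := by
    conv_lhs => rw [← hinv (br x y z), hder x y z, map_add, map_add,
      hder, hder, hder, hinv, hinv, hinv]
    abel
  have h1 := hder x y (D z)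
  have h2 := hder y z (D x)
  have h3 := hder z x (D y)
  rw [hinv] at h1 h2 h3
  rw [hbA, hbA, hbA, h1, h2, h3]
  have e1 : br (D y) z (D x) = br (D x) (D y) z :=
    (cyc _ _ _).trans (cyc _ _ _)
  have e2 : br y (D z) (D x) = br (D x) y (D z) :=
    (cyc _ _ _).trans (cyc _ _ _)
  have e3 : br (D z) x (D y) = br x (D y) (D z) := cyc _ _ _
  have e4 : br z (D x) (D y) = br (D x) (D y) z := cyc _ _ _
  have e5 : br y z x = br x y z := (cyc _ _ _).trans (cyc _ _ _)
  have e6 : br z x y = br x y z := cyc _ _ _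
  rw [e1, e2, e3, e4, e5, e6]
  linear_combination (norm := abel) - hkey
end

section
/- Let A be an n-dimensional 3-Lie algebra over a field F of characteristic zero with basis x1,...,xn and dual basis x1*,...,xn* of A*, and let D be an involutive derivation on A. Let B = A × A* be the semi-direct product 3-Lie algebra with bracket μ(x1+ξ1, x2+ξ2, x3+ξ3) = [x1,x2,x3] + ad*(x1,x2)ξ3 + ad*(x2,x3)ξ1 + ad*(x3,x1)ξ2, where (ad*(x,y)ξ)(z) = −ξ([x,y,z]). Set r = Σᵢ (xᵢ* ⊗ Dxᵢ − Dxᵢ ⊗ xᵢ*) ∈ B ⊗ B, and write r = Σₐ uₐ ⊗ vₐ (a ranging over 2n indices, with uₐ = xₐ* and vₐ = Dxₐ for a ≤ n, and uₐ = −Dx_{a−n}, vₐ = x_{a−n}* for a > n). Then r is a skew-symmetric solution of the 3-Lie classical Yang–Baxter equation in B: Σ_{a,b,c} ( μ(uₐ,u_b,u_c) ⊗ vₐ ⊗ v_b ⊗ v_c + uₐ ⊗ μ(vₐ,u_b,u_c) ⊗ v_b ⊗ v_c + uₐ ⊗ u_b ⊗ μ(vₐ,v_b,u_c) ⊗ v_c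 + uₐ ⊗ u_b ⊗ u_c ⊗ μ(vₐ,v_b,v_c) ) = 0 in B⊗B⊗B⊗B. -/
open scoped TensorProduct

open Module

/-!
Pairing the Yang–Baxter tensor of `r = ∑ₐ uₐ ⊗ vₐ` with linear forms `f₁ ⊗ f₂ ⊗ f₃ ⊗ f₄` gives
four terms `fₖ (μ gᵢ gⱼ gₗ)`, each `gᵢ` being either `r♯ fᵢ = ∑ₐ fᵢ uₐ • vₐ` or its transpose
`∑ₐ fᵢ vₐ • uₐ`, which is `-r♯ fᵢ` by skew-symmetry. The coordinate forms of `A × A*` are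
`(x, ξ) ↦ α x + ξ a`, and `r♯` sends such a form to `(D a, -α ∘ D)`. After these substitutions
the pairing is an alternating sum of the values `αₖ (K aᵢ aⱼ aₗ)`, where
`K x y z = [Dx, Dy, Dz] - D[Dy, Dz, x] + D[Dx, Dz, y] - D[Dx, Dy, z]`
vanishes: apply the derivation rule to `D[Dx, Dy, Dz]` and use `D ∘ D = id`.
-/

namespace ThreeLie

section YangBaxter

variable {R B ι κ : Type*} [CommRing R] [AddCommGroup B] [Module R B] [Fintype ι]

def cybe (μ : B →ₗ[R] B →ₗ[R] B →ₗ[R] B) (u v : ι → B) : B ⊗[R] (B ⊗[R] (B ⊗[R] B)) :=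
  ∑ a, ∑ b, ∑ c,
    (μ (u a) (u b) (u c) ⊗ₜ[R] (v a ⊗ₜ[R] (v b ⊗ₜ[R] v c))
      + u a ⊗ₜ[R] (μ (v a) (u b) (u c) ⊗ₜ[R] (v b ⊗ₜ[R] v c))
      + u a ⊗ₜ[R] (u b ⊗ₜ[R] (μ (v a) (v b) (u c) ⊗ₜ[R] v c))
      + u a ⊗ₜ[R] (u b ⊗ₜ[R] (u c ⊗ₜ[R] μ (v a) (v b) (v c))))

def contract (u v : ι → B) (f : Dual R B) : B := ∑ a, f (u a) • v a

theorem tensorProduct_repr_cybe (β : Basis κ R B) (μ : B →ₗ[R] B →ₗ[R] B →ₗ[R] B)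
    (u v : ι → B) (s₁ s₂ s₃ s₄ : κ) :
    (β.tensorProduct (β.tensorProduct (β.tensorProduct β))).repr (cybe μ u v) (s₁, s₂, s₃, s₄) =
      β.coord s₁ (μ (contract v u (β.coord s₂)) (contract v u (β.coord s₃))
          (contract v u (β.coord s₄)))
        + β.coord s₂ (μ (contract u v (β.coord s₁)) (contract v u (β.coord s₃))
          (contract v u (β.coord s₄)))
        + β.coord s₃ (μ (contract u v (β.coord s₁)) (contract u v (β.coord s₂))
          (contract v u (β.coord s₄)))
        + β.coord s₄ (μ (contract u v (β.coord s₁)) (contract u v (β.coord s₂))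
          (contract u v (β.coord s₃))) := by
  simp only [cybe, contract, map_sum, map_add, map_smul, LinearMap.coe_sum, Finset.sum_apply,
    LinearMap.smul_apply, Finsupp.coe_finsetSum, Finsupp.coe_add, Pi.add_apply,
    Basis.tensorProduct_repr_tmul_apply, Basis.coord_apply, smul_eq_mul,
    Finset.sum_add_distrib, Finset.mul_sum]
  congr 1; congr 1; congr 1
  all_goals
    rw [Finset.sum_comm_cycle]
    refine Finset.sum_congr rfl fun _ _ => ?_
    rw [Finset.sum_comm]
    exact Finset.sum_congr rfl fun _ _ => Finset.sum_congr rfl fun _ _ => by ring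

end YangBaxter

section InvolutiveDerivation

variable {R A : Type*} [CommRing R] [AddCommGroup A] [Module R A]
  {br : A →ₗ[R] A →ₗ[R] A →ₗ[R] A} {D : A →ₗ[R] A}

theorem involutive_derivation_bracket (hbr₁ : br.IsAlt) (hbr₂ : ∀ x, (br x).IsAlt)
    (hder : ∀ x y z, D (br x y z) = br (D x) y z + br x (D y) z + br x y (D z))
    (hD : Function.Involutive D) (x y z : A) :
    br (D x) (D y) (D z) = D (br (D y) (D z) x) - D (br (D x) (D z) y) + D (br (D x) (D y) z) :=
  calc br (D x) (D y) (D z) = D (D (br (D x) (D y) (D z))) := (hD _).symm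
    _ = D (br x (D y) (D z)) + D (br (D x) y (D z)) + D (br (D x) (D y) z) := by
      rw [hder, hD, hD, hD, map_add, map_add]
    _ = _ := by
      rw [← hbr₁.neg (D y) x, LinearMap.neg_apply, ← (hbr₂ (D y)).neg (D z) x,
        ← (hbr₂ (D x)).neg (D z) y, neg_neg, map_neg, sub_eq_add_neg]

end InvolutiveDerivation

section Semidirect

variable {R A : Type*} [CommRing R] [AddCommGroup A] [Module R A]

def semidirectBracket (br : A →ₗ[R] A →ₗ[R] A →ₗ[R] A) :
    A × Dual R A →ₗ[R] A × Dual R A →ₗ[R] A × Dual R A →ₗ[R] A × Dual R A :=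
  LinearMap.mk₂ R
    (fun p q =>
      { toFun := fun r => (br p.1 q.1 r.1,
          -(r.2 ∘ₗ br p.1 q.1) + -(p.2 ∘ₗ br q.1 r.1) + -(q.2 ∘ₗ br r.1 p.1))
        map_add' := by intros; ext <;> simp; ring
        map_smul' := by intros; ext <;> simp })
    (by intros; ext <;> simp <;> ring) (by intros; ext <;> simp)
    (by intros; ext <;> simp <;> ring) (by intros; ext <;> simp)

theorem semidirectBracket_apply (br : A →ₗ[R] A →ₗ[R] A →ₗ[R] A) (p q r : A × Dual R A) :
    semidirectBracket br p q r = (br p.1 q.1 r.1,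
      -(r.2 ∘ₗ br p.1 q.1) + -(p.2 ∘ₗ br q.1 r.1) + -(q.2 ∘ₗ br r.1 p.1)) := rfl

def rSharp (D : A →ₗ[R] A) (α : Dual R A) (a : A) : A × Dual R A := (D a, -(α ∘ₗ D))

theorem semidirectBracket_rSharp_cybe_eval {br : A →ₗ[R] A →ₗ[R] A →ₗ[R] A}
    {D : A →ₗ[R] A} (hbr₁ : br.IsAlt) (hbr₂ : ∀ x, (br x).IsAlt)
    (hder : ∀ x y z, D (br x y z) = br (D x) y z + br x (D y) z + br x y (D z))
    (hD : Function.Involutive D) (α₁ α₂ α₃ α₄ : Dual R A) (a₁ a₂ a₃ a₄ : A) :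
    α₁.coprod (Dual.eval R A a₁)
        (semidirectBracket br (-rSharp D α₂ a₂) (-rSharp D α₃ a₃) (-rSharp D α₄ a₄))
      + α₂.coprod (Dual.eval R A a₂)
        (semidirectBracket br (rSharp D α₁ a₁) (-rSharp D α₃ a₃) (-rSharp D α₄ a₄))
      + α₃.coprod (Dual.eval R A a₃)
        (semidirectBracket br (rSharp D α₁ a₁) (rSharp D α₂ a₂) (-rSharp D α₄ a₄))
      + α₄.coprod (Dual.eval R A a₄)
        (semidirectBracket br (rSharp D α₁ a₁) (rSharp D α₂ a₂) (rSharp D α₃ a₃)) = 0 := by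
  have key := fun (α : Dual R A) x y z =>
    congrArg α (involutive_derivation_bracket hbr₁ hbr₂ hder hD x y z)
  simp only [map_add, map_sub] at key
  simp only [semidirectBracket_apply, rSharp, Prod.fst_neg, Prod.snd_neg, LinearMap.coprod_apply,
    Dual.eval_apply, map_neg, LinearMap.add_apply, LinearMap.neg_apply, LinearMap.comp_apply,
    neg_neg]
  rw [← hbr₁.neg (D a₂) (D a₄), ← hbr₁.neg (D a₁) (D a₄), ← hbr₁.neg (D a₁) (D a₃)]
  simp only [LinearMap.neg_apply, map_neg]
  linear_combination key α₂ a₁ a₃ a₄ + key α₄ a₁ a₂ a₃ - key α₁ a₂ a₃ a₄ - key α₃ a₁ a₂ a₄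

end Semidirect

section RMatrix

variable {R A ι : Type*} [CommRing R] [AddCommGroup A] [Module R A] [Fintype ι]
  (bas : Basis ι R A) (D : A →ₗ[R] A)

noncomputable def rmatU : ι ⊕ ι → A × Dual R A :=
  Sum.elim (fun i => (0, bas.coord i)) (fun i => (-D (bas i), 0))

noncomputable def rmatV : ι ⊕ ι → A × Dual R A :=
  Sum.elim (fun i => (D (bas i), 0)) (fun i => (0, bas.coord i))

theorem sum_rmatU_tmul_rmatV :
    ∑ a, rmatU bas D a ⊗ₜ[R] rmatV bas D a = -∑ a, rmatV bas D a ⊗ₜ[R] rmatU bas D a := by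
  have hneg (x : A) : ((-x, 0) : A × Dual R A) = -(x, 0) := by simp
  rw [← (Equiv.sumComm ι ι).sum_comp (fun a => rmatV bas D a ⊗ₜ[R] rmatU bas D a)]
  -- the negation on the tensor product is found only when its type is spelled out
  refine (Fintype.sum_congr _ _ ?_).trans
    (Finset.sum_neg_distrib (G := (A × Dual R A) ⊗[R] (A × Dual R A)) _)
  rintro (i | i)
  · simp only [rmatU, rmatV, Equiv.sumComm_apply, Sum.swap_inl, Sum.elim_inl, Sum.elim_inr, hneg,
      TensorProduct.tmul_neg]
    exact (neg_neg (_ : (A × Dual R A) ⊗[R] (A × Dual R A))).symm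
  · simp only [rmatU, rmatV, Equiv.sumComm_apply, Sum.swap_inr, Sum.elim_inl, Sum.elim_inr, hneg,
      TensorProduct.neg_tmul]

theorem sum_repr_smul_map_basis (a : A) : ∑ i, bas.repr a i • D (bas i) = D a := by
  simp_rw [← map_smul, ← map_sum, bas.sum_repr]

theorem contract_rmatU_rmatV (α : Dual R A) (a : A) :
    contract (rmatU bas D) (rmatV bas D) (α.coprod (Dual.eval R A a)) = rSharp D α a := by
  refine Prod.ext ?_ ?_
  · simp [contract, rmatU, rmatV, rSharp, Fintype.sum_sum_type, Prod.fst_sum, sum_repr_smul_map_basis]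
  · simpa [contract, rmatU, rmatV, rSharp, Fintype.sum_sum_type, Prod.snd_sum]
      using bas.sum_dual_apply_smul_coord (α ∘ₗ D)

theorem contract_rmatV_rmatU (α : Dual R A) (a : A) :
    contract (rmatV bas D) (rmatU bas D) (α.coprod (Dual.eval R A a)) = -rSharp D α a := by
  refine Prod.ext ?_ ?_
  · simp [contract, rmatU, rmatV, rSharp, Fintype.sum_sum_type, Prod.fst_sum, sum_repr_smul_map_basis]
  · simpa [contract, rmatU, rmatV, rSharp, Fintype.sum_sum_type, Prod.snd_sum]
      using bas.sum_dual_apply_smul_coord (α ∘ₗ D)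

theorem exists_coord_prod_dualBasis_eq_coprod [DecidableEq ι] (s : ι ⊕ ι) :
    ∃ (α : Dual R A) (a : A), (bas.prod bas.dualBasis).coord s = α.coprod (Dual.eval R A a) := by
  rcases s with i | i
  · exact ⟨bas.coord i, 0, by ext <;> simp⟩
  · exact ⟨0, bas i, by ext <;> simp⟩

theorem cybe_semidirectBracket_rmat_eq_zero {br : A →ₗ[R] A →ₗ[R] A →ₗ[R] A}
    (hbr₁ : br.IsAlt) (hbr₂ : ∀ x, (br x).IsAlt)
    (hder : ∀ x y z, D (br x y z) = br (D x) y z + br x (D y) z + br x y (D z))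
    (hD : Function.Involutive D) :
    cybe (semidirectBracket br) (rmatU bas D) (rmatV bas D) = 0 := by
  classical
  let β := bas.prod bas.dualBasis
  apply (β.tensorProduct (β.tensorProduct (β.tensorProduct β))).repr.injective
  ext ⟨s₁, s₂, s₃, s₄⟩
  obtain ⟨α₁, a₁, h₁⟩ := exists_coord_prod_dualBasis_eq_coprod bas s₁
  obtain ⟨α₂, a₂, h₂⟩ := exists_coord_prod_dualBasis_eq_coprod bas s₂
  obtain ⟨α₃, a₃, h₃⟩ := exists_coord_prod_dualBasis_eq_coprod bas s₃
  obtain ⟨α₄, a₄, h₄⟩ := exists_coord_prod_dualBasis_eq_coprod bas s₄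
  rw [tensorProduct_repr_cybe, h₁, h₂, h₃, h₄]
  simp only [contract_rmatU_rmatV, contract_rmatV_rmatU, map_zero, Finsupp.coe_zero,
    Pi.zero_apply]
  exact semidirectBracket_rSharp_cybe_eval hbr₁ hbr₂ hder hD α₁ α₂ α₃ α₄ a₁ a₂ a₃ a₄

end RMatrix

end ThreeLie

theorem stmt15_general
    (F A : Type*) [Field F] [AddCommGroup A] [Module F A]
    (n : ℕ) (bas : Module.Basis (Fin n) F A)
    (br : A →ₗ[F] A →ₗ[F] A →ₗ[F] A)
    (halt1 : ∀ x z : A, br x x z = 0)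
    (halt2 : ∀ x y : A, br x y y = 0)
    (D : A →ₗ[F] A)
    (hder : ∀ x y z : A,
      D (br x y z) = br (D x) y z + br x (D y) z + br x y (D z))
    (hinv : ∀ x : A, D (D x) = x)
    (μ : A × Module.Dual F A → A × Module.Dual F A → A × Module.Dual F A →
      A × Module.Dual F A)
    (hμ : ∀ p q r : A × Module.Dual F A,
      μ p q r = (br p.1 q.1 r.1,
        -(r.2 ∘ₗ br p.1 q.1) + -(p.2 ∘ₗ br q.1 r.1) + -(q.2 ∘ₗ br r.1 p.1)))
    (u v : Fin n ⊕ Fin n → A × Module.Dual F A)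
    (hu1 : ∀ i : Fin n, u (Sum.inl i) = (0, bas.coord i))
    (hu2 : ∀ i : Fin n, u (Sum.inr i) = (-(D (bas i)), 0))
    (hv1 : ∀ i : Fin n, v (Sum.inl i) = (D (bas i), 0))
    (hv2 : ∀ i : Fin n, v (Sum.inr i) = (0, bas.coord i))
    :
    ((∑ a : Fin n ⊕ Fin n, u a ⊗ₜ[F] v a) =
      -∑ a : Fin n ⊕ Fin n, v a ⊗ₜ[F] u a) ∧
    (∑ a : Fin n ⊕ Fin n, ∑ b : Fin n ⊕ Fin n, ∑ c : Fin n ⊕ Fin n,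
      (μ (u a) (u b) (u c) ⊗ₜ[F] (v a ⊗ₜ[F] (v b ⊗ₜ[F] v c))
        + u a ⊗ₜ[F] (μ (v a) (u b) (u c) ⊗ₜ[F] (v b ⊗ₜ[F] v c))
        + u a ⊗ₜ[F] (u b ⊗ₜ[F] (μ (v a) (v b) (u c) ⊗ₜ[F] v c))
        + u a ⊗ₜ[F] (u b ⊗ₜ[F] (u c ⊗ₜ[F] μ (v a) (v b) (v c))))) = 0 := by
  have hμ' : μ = fun p q r => ThreeLie.semidirectBracket br p q r :=
    funext fun p => funext fun q => funext fun r => hμ p q r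
  have hu : u = ThreeLie.rmatU bas D := funext (Sum.rec hu1 hu2)
  have hv : v = ThreeLie.rmatV bas D := funext (Sum.rec hv1 hv2)
  subst hμ' hu hv
  exact ⟨ThreeLie.sum_rmatU_tmul_rmatV bas D,
    ThreeLie.cybe_semidirectBracket_rmat_eq_zero bas D (fun x => LinearMap.ext (halt1 x)) halt2
      hder hinv⟩

theorem stmt15
    (F A : Type*) [Field F] [CharZero F] [AddCommGroup A] [Module F A]
    (n : ℕ) (bas : Module.Basis (Fin n) F A)
    (br : A →ₗ[F] A →ₗ[F] A →ₗ[F] A)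
    (halt1 : ∀ x z : A, br x x z = 0)
    (halt2 : ∀ x y : A, br x y y = 0)
    (halt3 : ∀ x y : A, br x y x = 0)
    (hfil : ∀ x1 x2 x3 x4 x5 : A,
      br x1 x2 (br x3 x4 x5) =
        br (br x1 x2 x3) x4 x5 + br x3 (br x1 x2 x4) x5 + br x3 x4 (br x1 x2 x5))
    (D : A →ₗ[F] A)
    (hder : ∀ x y z : A,
      D (br x y z) = br (D x) y z + br x (D y) z + br x y (D z))
    (hinv : ∀ x : A, D (D x) = x)
    (μ : A × Module.Dual F A → A × Module.Dual F A → A × Module.Dual F A →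
      A × Module.Dual F A)
    (hμ : ∀ p q r : A × Module.Dual F A,
      μ p q r = (br p.1 q.1 r.1,
        -(r.2 ∘ₗ br p.1 q.1) + -(p.2 ∘ₗ br q.1 r.1) + -(q.2 ∘ₗ br r.1 p.1)))
    (u v : Fin n ⊕ Fin n → A × Module.Dual F A)
    (hu1 : ∀ i : Fin n, u (Sum.inl i) = (0, bas.coord i))
    (hu2 : ∀ i : Fin n, u (Sum.inr i) = (-(D (bas i)), 0))
    (hv1 : ∀ i : Fin n, v (Sum.inl i) = (D (bas i), 0))
    (hv2 : ∀ i : Fin n, v (Sum.inr i) = (0, bas.coord i))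
    :
    ((∑ a : Fin n ⊕ Fin n, u a ⊗ₜ[F] v a) =
      -∑ a : Fin n ⊕ Fin n, v a ⊗ₜ[F] u a) ∧
    (∑ a : Fin n ⊕ Fin n, ∑ b : Fin n ⊕ Fin n, ∑ c : Fin n ⊕ Fin n,
      (μ (u a) (u b) (u c) ⊗ₜ[F] (v a ⊗ₜ[F] (v b ⊗ₜ[F] v c))
        + u a ⊗ₜ[F] (μ (v a) (u b) (u c) ⊗ₜ[F] (v b ⊗ₜ[F] v c))
        + u a ⊗ₜ[F] (u b ⊗ₜ[F] (μ (v a) (v b) (u c) ⊗ₜ[F] v c))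
        + u a ⊗ₜ[F] (u b ⊗ₜ[F] (u c ⊗ₜ[F] μ (v a) (v b) (v c))))) = 0 :=
  stmt15_general F A n bas br halt1 halt2 D hder hinv μ hμ u v hu1 hu2 hv1 hv2
end

section
/- Let F be a field of characteristic zero and B an 8-dimensional F-vector space with basis e1, e2, e3, e4, f1, f2, f3, f4. Let μ be the trilinear alternating bracket on B whose only nonzero values on basis triples, up to skew-symmetry, are μ(e2,e3,e4) = e1, μ(e2,e3,f1) = −f4, μ(e2,e4,f1) = f3, and μ(e3,e4,f1) = −f2. Then μ satisfies the Filippov identity, so (B, μ) is a 3-Lie algebra. -/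
/-!
Every bracket of two basis vectors with one of `b 0, b 5, b 6, b 7` vanishes, and every bracket
of three basis vectors lies in the span of these four. Hence all nested brackets
`μ x y (μ z w v)` vanish, and both sides of the Filippov identity are zero.
-/

namespace LinearMap

open Submodule

section Trilinear

variable {R M N : Type*} [CommRing R] [AddCommGroup M] [Module R M] [AddCommGroup N]
  [Module R N] (μ : M →ₗ[R] M →ₗ[R] M →ₗ[R] N)

theorem map_swap₁₂ (h : ∀ x z, μ x x z = 0) (x y z : M) : μ y x z = -μ x y z := by
  have hxy := h (x + y) z
  simp only [map_add, add_apply, h, zero_add, add_zero] at hxy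
  exact eq_neg_of_add_eq_zero_left hxy

theorem map_swap₂₃ (h : ∀ x y, μ x y y = 0) (x y z : M) : μ x z y = -μ x y z := by
  have hyz := h x (y + z)
  simp only [map_add, add_apply, h, zero_add, add_zero] at hyz
  exact eq_neg_of_add_eq_zero_left hyz

theorem map_swap₁₃ (h : ∀ x y, μ x y x = 0) (x y z : M) : μ z y x = -μ x y z := by
  have hxz := h (x + z) y
  simp only [map_add, add_apply, h, zero_add, add_zero] at hxz
  exact eq_neg_of_add_eq_zero_left hxz

/-- Every other triple gives `0` or `±` the value on its sorted rearrangement. -/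
theorem forall_apply_of_forall_lt {ι : Type*} [LinearOrder ι] (v : ι → M)
    (h₁₂ : ∀ x z, μ x x z = 0) (h₂₃ : ∀ x y, μ x y y = 0) (h₁₃ : ∀ x y, μ x y x = 0)
    (Q : ι → Prop) (P : N → Prop) (hP₀ : P 0) (hPneg : ∀ u, P u → P (-u))
    (hlt : ∀ i j k, i < j → j < k → (Q i ∨ Q j ∨ Q k) → P (μ (v i) (v j) (v k))) :
    ∀ i j k, (Q i ∨ Q j ∨ Q k) → P (μ (v i) (v j) (v k)) := by
  intro i j k hQ
  rcases lt_trichotomy i j with hij | rfl | hji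
  · rcases lt_trichotomy j k with hjk | rfl | hkj
    · exact hlt i j k hij hjk hQ
    · rw [h₂₃]; exact hP₀
    · rcases lt_trichotomy i k with hik | rfl | hki
      · rw [map_swap₂₃ μ h₂₃ (v i) (v k)]
        exact hPneg _ (hlt i k j hik hkj (by tauto))
      · rw [h₁₃]; exact hP₀
      · rw [map_swap₁₃ μ h₁₃ (v k) (v j), map_swap₂₃ μ h₂₃ (v k) (v i)]
        exact hPneg _ (hPneg _ (hlt k i j hki hij (by tauto)))
  · rw [h₁₂]; exact hP₀
  · rcases lt_trichotomy i k with hik | rfl | hki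
    · rw [map_swap₁₂ μ h₁₂ (v j)]
      exact hPneg _ (hlt j i k hji hik (by tauto))
    · rw [h₁₃]; exact hP₀
    · rcases lt_trichotomy j k with hjk | rfl | hkj
      · rw [map_swap₁₂ μ h₁₂ (v j), map_swap₂₃ μ h₂₃ (v j) (v k)]
        exact hPneg _ (hPneg _ (hlt j k i hjk hki (by tauto)))
      · rw [h₂₃]; exact hP₀
      · rw [map_swap₁₃ μ h₁₃ (v k)]
        exact hPneg _ (hlt k j i hkj hji (by tauto))

end Trilinear

theorem apply_apply_eq_zero_of_basis {R M ι : Type*} [CommRing R] [AddCommGroup M]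
    [Module R M] [Fintype ι] (b : Module.Basis ι R M)
    (μ : M →ₗ[R] M →ₗ[R] M →ₗ[R] M) (C : Set ι)
    (hC : ∀ i j k, k ∈ C → μ (b i) (b j) (b k) = 0)
    (hrange : ∀ i j k, μ (b i) (b j) (b k) ∈ span R (b '' C)) (x y z w v : M) :
    μ x y (μ z w v) = 0 := by
  have hker : span R (b '' C) ≤ ker (μ x y) := by
    refine span_le.2 (Set.image_subset_iff.2 fun k hk => ?_)
    change μ x y (b k) = 0
    rw [← b.sum_repr x, ← b.sum_repr y]
    simp only [map_sum, sum_apply, map_smul, smul_apply, fun i j => hC i j k hk, smul_zero,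
      Finset.sum_const_zero]
  have hbasis : ∀ i j k, μ x y (μ (b i) (b j) (b k)) = 0 := fun i j k => hker (hrange i j k)
  rw [← b.sum_repr z, ← b.sum_repr w, ← b.sum_repr v]
  simp only [map_sum, sum_apply, map_smul, smul_apply, hbasis, smul_zero, Finset.sum_const_zero]

theorem filippov_of_apply_apply_eq_zero {R M : Type*} [CommRing R] [AddCommGroup M]
    [Module R M] (μ : M →ₗ[R] M →ₗ[R] M →ₗ[R] M)
    (h₁₂ : ∀ x z, μ x x z = 0) (h₂₃ : ∀ x y, μ x y y = 0)
    (hnil : ∀ x y z w v, μ x y (μ z w v) = 0) (x₁ x₂ x₃ x₄ x₅ : M) :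
    μ x₁ x₂ (μ x₃ x₄ x₅) =
      μ (μ x₁ x₂ x₃) x₄ x₅ + μ x₃ (μ x₁ x₂ x₄) x₅ + μ x₃ x₄ (μ x₁ x₂ x₅) := by
  rw [map_swap₁₂ μ h₁₂ x₄ (μ x₁ x₂ x₃), map_swap₂₃ μ h₂₃ x₄ x₅ (μ x₁ x₂ x₃), neg_neg,
    map_swap₂₃ μ h₂₃ x₃ x₅ (μ x₁ x₂ x₄)]
  simp only [hnil, neg_zero, add_zero]

end LinearMap

open LinearMap

theorem stmt16_general
    (F B : Type*) [Field F] [AddCommGroup B] [Module F B]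
    (b : Module.Basis (Fin 8) F B)
    (μ : B →ₗ[F] B →ₗ[F] B →ₗ[F] B)
    (halt1 : ∀ x z : B, μ x x z = 0)
    (halt2 : ∀ x y : B, μ x y y = 0)
    (halt3 : ∀ x y : B, μ x y x = 0)
    (hv0 : μ (b 1) (b 2) (b 3) = b 0)
    (hv1 : μ (b 1) (b 2) (b 4) = -b 7)
    (hv2 : μ (b 1) (b 3) (b 4) = b 6)
    (hv3 : μ (b 2) (b 3) (b 4) = -b 5)
    (hzero : ∀ i j k : Fin 8, i < j → j < k →
      (i, j, k) ∉ ([(1, 2, 3), (1, 2, 4), (1, 3, 4), (2, 3, 4)] : List (Fin 8 × Fin 8 × Fin 8)) →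
      μ (b i) (b j) (b k) = 0)
    :
    ∀ x1 x2 x3 x4 x5 : B,
      μ x1 x2 (μ x3 x4 x5) =
        μ (μ x1 x2 x3) x4 x5 + μ x3 (μ x1 x2 x4) x5 +
          μ x3 x4 (μ x1 x2 x5) := by
  let C : Set (Fin 8) := {l | l = 0 ∨ 5 ≤ l}
  have hC : ∀ i j k, k ∈ C → μ (b i) (b j) (b k) = 0 := by
    refine fun i j k hk => forall_apply_of_forall_lt μ b halt1 halt2 halt3 (· ∈ C) (· = 0) rfl
      (fun u hu => by rw [hu, neg_zero]) (fun i j k hij hjk hQ => hzero i j k hij hjk ?_)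
      i j k (Or.inr (Or.inr hk))
    simp only [List.mem_cons, List.not_mem_nil, or_false, Prod.mk.injEq]
    rintro (⟨rfl, rfl, rfl⟩ | ⟨rfl, rfl, rfl⟩ | ⟨rfl, rfl, rfl⟩ | ⟨rfl, rfl, rfl⟩) <;>
      revert hQ <;> decide
  have hrange : ∀ i j k, μ (b i) (b j) (b k) ∈ Submodule.span F (b '' C) := by
    have hmem : ∀ l ∈ C, b l ∈ Submodule.span F (b '' C) :=
      fun l hl => Submodule.subset_span ⟨l, hl, rfl⟩
    refine fun i j k => forall_apply_of_forall_lt μ b halt1 halt2 halt3 (fun _ => True) _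
      (Submodule.zero_mem _) (fun u => (Submodule.neg_mem_iff _).2)
      (fun i j k hij hjk _ => ?_) i j k (Or.inl trivial)
    by_cases hlist : (i, j, k) ∈
        ([(1, 2, 3), (1, 2, 4), (1, 3, 4), (2, 3, 4)] : List (Fin 8 × Fin 8 × Fin 8))
    · simp only [List.mem_cons, List.not_mem_nil, or_false, Prod.mk.injEq] at hlist
      rcases hlist with ⟨rfl, rfl, rfl⟩ | ⟨rfl, rfl, rfl⟩ | ⟨rfl, rfl, rfl⟩ | ⟨rfl, rfl, rfl⟩
      · exact hv0 ▸ hmem 0 (Or.inl rfl)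
      · exact hv1 ▸ Submodule.neg_mem _ (hmem 7 (Or.inr (by decide)))
      · exact hv2 ▸ hmem 6 (Or.inr (by decide))
      · exact hv3 ▸ Submodule.neg_mem _ (hmem 5 (Or.inr (by decide)))
    · rw [hzero i j k hij hjk hlist]
      exact Submodule.zero_mem _
  exact filippov_of_apply_apply_eq_zero μ halt1 halt2
    (apply_apply_eq_zero_of_basis b μ C hC hrange)

theorem stmt16
    (F B : Type*) [Field F] [CharZero F] [AddCommGroup B] [Module F B]
    (b : Module.Basis (Fin 8) F B)
    (μ : B →ₗ[F] B →ₗ[F] B →ₗ[F] B)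
    (halt1 : ∀ x z : B, μ x x z = 0)
    (halt2 : ∀ x y : B, μ x y y = 0)
    (halt3 : ∀ x y : B, μ x y x = 0)
    (hv0 : μ (b 1) (b 2) (b 3) = b 0)
    (hv1 : μ (b 1) (b 2) (b 4) = -b 7)
    (hv2 : μ (b 1) (b 3) (b 4) = b 6)
    (hv3 : μ (b 2) (b 3) (b 4) = -b 5)
    (hzero : ∀ i j k : Fin 8, i < j → j < k →
      (i, j, k) ∉ ([(1, 2, 3), (1, 2, 4), (1, 3, 4), (2, 3, 4)] : List (Fin 8 × Fin 8 × Fin 8)) →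
      μ (b i) (b j) (b k) = 0)
    :
    ∀ x1 x2 x3 x4 x5 : B,
      μ x1 x2 (μ x3 x4 x5) =
        μ (μ x1 x2 x3) x4 x5 + μ x3 (μ x1 x2 x4) x5 +
          μ x3 x4 (μ x1 x2 x5) :=
  stmt16_general F B b μ halt1 halt2 halt3 hv0 hv1 hv2 hv3 hzero
end

section
/- Let F be a field of characteristic zero and B an 8-dimensional F-vector space with basis e1, e2, e3, e4, f1, f2, f3, f4. For a, b, c ∈ B write a∧b∧c for the alternating tensor Σ_{σ ∈ S3} sgn(σ) w_{σ(1)} ⊗ w_{σ(2)} ⊗ w_{σ(3)} in B⊗B⊗B, where (w1,w2,w3) = (a,b,c). Define the linear map Δ : B → B⊗B⊗B on the basis by Δ(f1) = f2∧f4∧f3, Δ(e2) = e1∧f3∧f4, Δ(e3) = e1∧f4∧f2, Δ(e4) = e1∧f2∧f3, and Δ(e1) = Δ(f2) = Δ(f3) = Δ(f4) = 0. Then the trilinear operation on the dual space B* defined by ⟨{α,β,γ}, v⟩ = (α⊗β⊗γ)(Δ(v)) for all v ∈ B is alternating and satisfies the Filippov identity, i.e. (B*, {·,·,·}) is a 3-Lie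 algebra. -/
/-!
Every value of `Δ` is a combination of alternating tensors `x ∧ y ∧ z` with `x, y, z` in
`S = {e₁, f₂, f₃, f₄}` (`b 0, b 5, b 6, b 7`), and `Δ` kills `S`. The first fact makes the
bracket alternating. Together they say that every bracket vanishes on `S`, and that a bracket
with one argument vanishing on `S` is zero; so every double bracket in the Filippov identity
is zero.
-/

open Module TensorProduct

theorem Module.Basis.range_le_of_forall_mem {ι R M N : Type*} [Semiring R] [AddCommMonoid M]
    [Module R M] [AddCommMonoid N] [Module R N] (b : Basis ι R M) {f : M →ₗ[R] N}
    {p : Submodule R N} (h : ∀ i, f (b i) ∈ p) : LinearMap.range f ≤ p := by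
  rw [LinearMap.range_eq_map, ← b.span_eq, Submodule.map_span_le]
  rintro _ ⟨i, rfl⟩
  exact h i

namespace TripleBracket

variable {F B : Type*} [CommRing F] [AddCommGroup B] [Module F B]

def altTensor (x y z : B) : B ⊗[F] (B ⊗[F] B) :=
  x ⊗ₜ (y ⊗ₜ z) - x ⊗ₜ (z ⊗ₜ y) - y ⊗ₜ (x ⊗ₜ z)
    + y ⊗ₜ (z ⊗ₜ x) + z ⊗ₜ (x ⊗ₜ y) - z ⊗ₜ (y ⊗ₜ x)

variable (F) in
def altTensorSpan (S : Set B) : Submodule F (B ⊗[F] (B ⊗[F] B)) :=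
  Submodule.span F {t | ∃ x ∈ S, ∃ y ∈ S, ∃ z ∈ S, altTensor x y z = t}

def tripleEval (α β γ : Dual F B) : Dual F (B ⊗[F] (B ⊗[F] B)) :=
  dualDistrib F B (B ⊗[F] B) (α ⊗ₜ dualDistrib F B B (β ⊗ₜ γ))

def tripleBracket (Δ : B →ₗ[F] B ⊗[F] (B ⊗[F] B)) (α β γ : Dual F B) : Dual F B :=
  tripleEval α β γ ∘ₗ Δ

theorem tripleEval_altTensor (α β γ : Dual F B) (x y z : B) :
    tripleEval α β γ (altTensor x y z) =
      α x * (β y * γ z) - α x * (β z * γ y) - α y * (β x * γ z)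
        + α y * (β z * γ x) + α z * (β x * γ y) - α z * (β y * γ x) := by
  simp [tripleEval, altTensor, dualDistrib_apply]

theorem tripleBracket_eq_zero_of_range_le {Δ : B →ₗ[F] B ⊗[F] (B ⊗[F] B)} {S : Set B}
    (hΔ : LinearMap.range Δ ≤ altTensorSpan F S) {α β γ : Dual F B}
    (h : ∀ x ∈ S, ∀ y ∈ S, ∀ z ∈ S, tripleEval α β γ (altTensor x y z) = 0) :
    tripleBracket Δ α β γ = 0 := by
  have hspan : altTensorSpan F S ≤ LinearMap.ker (tripleEval α β γ) :=
    Submodule.span_le.2 fun _ ⟨x, hx, y, hy, z, hz, ht⟩ => ht ▸ h x hx y hy z hz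
  exact LinearMap.range_le_ker_iff.1 (hΔ.trans hspan)

section Alternating

variable {Δ : B →ₗ[F] B ⊗[F] (B ⊗[F] B)} {S : Set B}

theorem tripleBracket_self_left (hΔ : LinearMap.range Δ ≤ altTensorSpan F S)
    (α γ : Dual F B) : tripleBracket Δ α α γ = 0 :=
  tripleBracket_eq_zero_of_range_le hΔ fun _ _ _ _ _ _ => by rw [tripleEval_altTensor]; ring

theorem tripleBracket_self_right (hΔ : LinearMap.range Δ ≤ altTensorSpan F S)
    (α β : Dual F B) : tripleBracket Δ α β β = 0 :=
  tripleBracket_eq_zero_of_range_le hΔ fun _ _ _ _ _ _ => by rw [tripleEval_altTensor]; ring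

theorem tripleBracket_self_outer (hΔ : LinearMap.range Δ ≤ altTensorSpan F S)
    (α β : Dual F B) : tripleBracket Δ α β α = 0 :=
  tripleBracket_eq_zero_of_range_le hΔ fun _ _ _ _ _ _ => by rw [tripleEval_altTensor]; ring

end Alternating

section Nilpotent

variable {Δ : B →ₗ[F] B ⊗[F] (B ⊗[F] B)} {S : Set B}
  (hΔ : LinearMap.range Δ ≤ altTensorSpan F S) {δ : Dual F B} (hδ : ∀ s ∈ S, δ s = 0)
include hΔ hδ

theorem tripleBracket_eq_zero_of_left (β γ : Dual F B) : tripleBracket Δ δ β γ = 0 :=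
  tripleBracket_eq_zero_of_range_le hΔ fun x hx y hy z hz => by
    simp [tripleEval_altTensor, hδ x hx, hδ y hy, hδ z hz]

theorem tripleBracket_eq_zero_of_middle (α γ : Dual F B) : tripleBracket Δ α δ γ = 0 :=
  tripleBracket_eq_zero_of_range_le hΔ fun x hx y hy z hz => by
    simp [tripleEval_altTensor, hδ x hx, hδ y hy, hδ z hz]

theorem tripleBracket_eq_zero_of_right (α β : Dual F B) : tripleBracket Δ α β δ = 0 :=
  tripleBracket_eq_zero_of_range_le hΔ fun x hx y hy z hz => by
    simp [tripleEval_altTensor, hδ x hx, hδ y hy, hδ z hz]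

end Nilpotent

theorem tripleBracket_filippov {Δ : B →ₗ[F] B ⊗[F] (B ⊗[F] B)} {S : Set B}
    (hΔ : LinearMap.range Δ ≤ altTensorSpan F S) (hS : ∀ s ∈ S, Δ s = 0)
    (a₁ a₂ a₃ a₄ a₅ : Dual F B) :
    tripleBracket Δ a₁ a₂ (tripleBracket Δ a₃ a₄ a₅) =
      tripleBracket Δ (tripleBracket Δ a₁ a₂ a₃) a₄ a₅
        + tripleBracket Δ a₃ (tripleBracket Δ a₁ a₂ a₄) a₅
        + tripleBracket Δ a₃ a₄ (tripleBracket Δ a₁ a₂ a₅) := by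
  have hvan : ∀ α β γ : Dual F B, ∀ s ∈ S, tripleBracket Δ α β γ s = 0 := fun α β γ s hs => by
    simp [tripleBracket, hS s hs]
  rw [tripleBracket_eq_zero_of_right hΔ (hvan _ _ _), tripleBracket_eq_zero_of_left hΔ (hvan _ _ _),
    tripleBracket_eq_zero_of_middle hΔ (hvan _ _ _), tripleBracket_eq_zero_of_right hΔ (hvan _ _ _)]
  simp

end TripleBracket

open TripleBracket in
theorem stmt17_general
    (F B : Type*) [Field F] [AddCommGroup B] [Module F B]
    (b : Module.Basis (Fin 8) F B)
    (Δ : B →ₗ[F] TensorProduct F B (TensorProduct F B B))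
    (w : B → B → B → TensorProduct F B (TensorProduct F B B))
    (hw : ∀ x y z : B, w x y z =
      x ⊗ₜ[F] (y ⊗ₜ[F] z) - x ⊗ₜ[F] (z ⊗ₜ[F] y) - y ⊗ₜ[F] (x ⊗ₜ[F] z)
        + y ⊗ₜ[F] (z ⊗ₜ[F] x) + z ⊗ₜ[F] (x ⊗ₜ[F] y) - z ⊗ₜ[F] (y ⊗ₜ[F] x))
    (hΔ1 : Δ (b 4) = w (b 5) (b 7) (b 6))
    (hΔ2 : Δ (b 1) = w (b 0) (b 6) (b 7))
    (hΔ3 : Δ (b 2) = w (b 0) (b 7) (b 5))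
    (hΔ4 : Δ (b 3) = w (b 0) (b 5) (b 6))
    (hΔ0 : Δ (b 0) = 0 ∧ Δ (b 5) = 0 ∧ Δ (b 6) = 0 ∧ Δ (b 7) = 0)
    (brD : Module.Dual F B → Module.Dual F B → Module.Dual F B → Module.Dual F B)
    (hbrD : ∀ (α β γ : Module.Dual F B) (v : B),
      brD α β γ v =
        TensorProduct.dualDistrib F B (TensorProduct F B B)
          (α ⊗ₜ[F] TensorProduct.dualDistrib F B B (β ⊗ₜ[F] γ)) (Δ v))
    :
    (∀ α γ : Module.Dual F B, brD α α γ = 0) ∧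
    (∀ α β : Module.Dual F B, brD α β β = 0) ∧
    (∀ α β : Module.Dual F B, brD α β α = 0) ∧
    (∀ a1 a2 a3 a4 a5 : Module.Dual F B,
      brD a1 a2 (brD a3 a4 a5) =
        brD (brD a1 a2 a3) a4 a5 + brD a3 (brD a1 a2 a4) a5 + brD a3 a4 (brD a1 a2 a5)) := by
  obtain rfl : w = altTensor := funext₃ hw
  obtain rfl : brD = tripleBracket Δ := funext₃ fun α β γ => LinearMap.ext (hbrD α β γ)
  obtain ⟨h0, h5, h6, h7⟩ := hΔ0
  set S : Set B := {b 0, b 5, b 6, b 7}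
  have hb0 : b 0 ∈ S := by simp [S]
  have hb5 : b 5 ∈ S := by simp [S]
  have hb6 : b 6 ∈ S := by simp [S]
  have hb7 : b 7 ∈ S := by simp [S]
  have hS : ∀ s ∈ S, Δ s = 0 := by
    rintro s (rfl | rfl | rfl | rfl) <;> assumption
  have hmem : ∀ {x y z}, x ∈ S → y ∈ S → z ∈ S → altTensor x y z ∈ altTensorSpan F S :=
    fun hx hy hz => Submodule.subset_span ⟨_, hx, _, hy, _, hz, rfl⟩
  have hΔ : LinearMap.range Δ ≤ altTensorSpan F S := by
    refine b.range_le_of_forall_mem fun i => ?_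
    fin_cases i
    · exact h0 ▸ zero_mem _
    · exact hΔ2 ▸ hmem hb0 hb6 hb7
    · exact hΔ3 ▸ hmem hb0 hb7 hb5
    · exact hΔ4 ▸ hmem hb0 hb5 hb6
    · exact hΔ1 ▸ hmem hb5 hb7 hb6
    · exact h5 ▸ zero_mem _
    · exact h6 ▸ zero_mem _
    · exact h7 ▸ zero_mem _
  exact ⟨tripleBracket_self_left hΔ, tripleBracket_self_right hΔ, tripleBracket_self_outer hΔ,
    tripleBracket_filippov hΔ hS⟩

theorem stmt17
    (F B : Type*) [Field F] [CharZero F] [AddCommGroup B] [Module F B]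
    (b : Module.Basis (Fin 8) F B)
    (Δ : B →ₗ[F] TensorProduct F B (TensorProduct F B B))
    (w : B → B → B → TensorProduct F B (TensorProduct F B B))
    (hw : ∀ x y z : B, w x y z =
      x ⊗ₜ[F] (y ⊗ₜ[F] z) - x ⊗ₜ[F] (z ⊗ₜ[F] y) - y ⊗ₜ[F] (x ⊗ₜ[F] z)
        + y ⊗ₜ[F] (z ⊗ₜ[F] x) + z ⊗ₜ[F] (x ⊗ₜ[F] y) - z ⊗ₜ[F] (y ⊗ₜ[F] x))
    (hΔ1 : Δ (b 4) = w (b 5) (b 7) (b 6))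
    (hΔ2 : Δ (b 1) = w (b 0) (b 6) (b 7))
    (hΔ3 : Δ (b 2) = w (b 0) (b 7) (b 5))
    (hΔ4 : Δ (b 3) = w (b 0) (b 5) (b 6))
    (hΔ0 : Δ (b 0) = 0 ∧ Δ (b 5) = 0 ∧ Δ (b 6) = 0 ∧ Δ (b 7) = 0)
    (brD : Module.Dual F B → Module.Dual F B → Module.Dual F B → Module.Dual F B)
    (hbrD : ∀ (α β γ : Module.Dual F B) (v : B),
      brD α β γ v =
        TensorProduct.dualDistrib F B (TensorProduct F B B)
          (α ⊗ₜ[F] TensorProduct.dualDistrib F B B (β ⊗ₜ[F] γ)) (Δ v))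
    :
    (∀ α γ : Module.Dual F B, brD α α γ = 0) ∧
    (∀ α β : Module.Dual F B, brD α β β = 0) ∧
    (∀ α β : Module.Dual F B, brD α β α = 0) ∧
    (∀ a1 a2 a3 a4 a5 : Module.Dual F B,
      brD a1 a2 (brD a3 a4 a5) =
        brD (brD a1 a2 a3) a4 a5 + brD a3 (brD a1 a2 a4) a5 + brD a3 a4 (brD a1 a2 a5)) :=
  stmt17_general F B b Δ w hw hΔ1 hΔ2 hΔ3 hΔ4 hΔ0 brD hbrD
end
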